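/- For the path P_n with n ≥ 1, the set of vertices v_i with i ≡ 2 (mod 3), together with v_n when n ≡ 1 (mod 3), is a CCD subset of V(P_n) of size ⌈n/3⌉. -/

import Mathlib

open Finset

variable {V : Type*} [Fintype V] [DecidableEq V]

/-- Number of neighbours of `v` inside the set `S`. -/
def nbrsIn (G : SimpleGraph V) [DecidableRel G.Adj] (S : Finset V) (v : V) : ℕ :=
  (S.filter (fun u => G.Adj v u)).card

/-- `H` is complementary component dominant (CCD). -/
def CCD (G : SimpleGraph V) [DecidableRel G.Adj] (H : Finset V) : Prop :=
  (∀ x y, G.Adj x y → x ∈ H → y ∈ H → nbrsIn G Hᶜ x = nbrsIn G Hᶜ y) ∧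
  (∀ u v, G.Adj u v → u ∉ H → v ∉ H → nbrsIn G H u = nbrsIn G H v)

/-- The path graph on `n` vertices `0, 1, …, n-1`. -/
def pathG (n : ℕ) : SimpleGraph (Fin n) where
  Adj i j := i.val + 1 = j.val ∨ j.val + 1 = i.val
  symm := by constructor; intro i j h; tauto
  loopless := by constructor; intro i h; rcases h with h | h <;> omega

instance (n : ℕ) : DecidableRel (pathG n).Adj :=
  fun i j => inferInstanceAs (Decidable (i.val + 1 = j.val ∨ j.val + 1 = i.val))

/-!
The standard set is independent, so the first CCD condition is vacuous. Two adjacent vertices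
outside it have indices `≡ 2` and `≡ 0 (mod 3)`; the first has only its left neighbour in the set
and the second only its right one. The size is the number of `i < n` with `i ≡ 1 (mod 3)`, plus
one for the last vertex when `n ≡ 1 (mod 3)`.
-/

theorem ccd_of_isIndepSet_of_nbrsIn_eq_one {G : SimpleGraph V} [DecidableRel G.Adj]
    {H : Finset V} (hH : G.IsIndepSet (H : Set V))
    (h_one : ∀ u v, G.Adj u v → u ∉ H → v ∉ H → nbrsIn G H u = 1) : CCD G H :=
  ⟨fun _ _ hxy hx hy => absurd hxy (hH hx hy hxy.ne),
    fun u v huv hu hv => (h_one u v huv hu hv).trans (h_one v u huv.symm hv hu).symm⟩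

theorem Fin.card_filter_univ_val {n : ℕ} (p : ℕ → Prop) [DecidablePred p] :
    #{i : Fin n | p i} = #{i ∈ range n | p i} := by
  simp only [card_filter]
  exact Fin.sum_univ_eq_sum_range (fun i => if p i then 1 else 0) n

@[simp]
theorem pathG_adj {n : ℕ} {i j : Fin n} :
    (pathG n).Adj i j ↔ i.val + 1 = j.val ∨ j.val + 1 = i.val :=
  Iff.rfl

def pathStandardSet (n : ℕ) : Finset (Fin n) :=
  univ.filter (fun i : Fin n => i.val % 3 = 1 ∨ (n % 3 = 1 ∧ i.val = n - 1))

theorem isIndepSet_pathStandardSet (n : ℕ) :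
    (pathG n).IsIndepSet (pathStandardSet n : Set (Fin n)) := by
  intro x hx y hy _ hxy
  simp only [pathStandardSet, coe_filter, mem_univ, true_and, Set.mem_ofPred_eq] at hx hy
  rw [pathG_adj] at hxy
  have := y.isLt
  omega

theorem nbrsIn_pathStandardSet_eq_one {n : ℕ} {u v : Fin n} (huv : (pathG n).Adj u v)
    (hu : u ∉ pathStandardSet n) (hv : v ∉ pathStandardSet n) :
    nbrsIn (pathG n) (pathStandardSet n) u = 1 := by
  simp only [pathStandardSet, mem_filter, mem_univ, true_and] at hu hv
  rw [pathG_adj] at huv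
  have := v.isLt
  rw [nbrsIn, card_eq_one]
  by_cases hu2 : u.val % 3 = 2
  · refine ⟨⟨u.val - 1, by omega⟩, ?_⟩
    ext w
    have := w.isLt
    simp only [pathStandardSet, pathG_adj, mem_filter, mem_univ, true_and, mem_singleton,
      Fin.ext_iff]
    omega
  · refine ⟨⟨u.val + 1, by omega⟩, ?_⟩
    ext w
    have := w.isLt
    simp only [pathStandardSet, pathG_adj, mem_filter, mem_univ, true_and, mem_singleton,
      Fin.ext_iff]
    omega

theorem card_pathStandardSet (n : ℕ) : #(pathStandardSet n) = (n + 2) / 3 := by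
  have hcount : #{i ∈ range n | i ≡ 1 [MOD 3]} = n / 3 + if 1 < n % 3 then 1 else 0 := by
    rw [← Nat.count_eq_card_filter_range]
    exact Nat.count_modEq_card n (by norm_num) 1
  rw [pathStandardSet, Fin.card_filter_univ_val (fun i => i % 3 = 1 ∨ (n % 3 = 1 ∧ i = n - 1))]
  by_cases hn : n % 3 = 1
  · have hsplit : {i ∈ range n | i % 3 = 1 ∨ (n % 3 = 1 ∧ i = n - 1)} =
        insert (n - 1) {i ∈ range n | i ≡ 1 [MOD 3]} := by
      ext i
      simp only [mem_filter, mem_range, mem_insert, Nat.ModEq, Nat.one_mod]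
      omega
    rw [hsplit, card_insert_of_notMem (by simp [Nat.ModEq]; omega), hcount, if_neg (by omega)]
    omega
  · have hsplit : {i ∈ range n | i % 3 = 1 ∨ (n % 3 = 1 ∧ i = n - 1)} =
        {i ∈ range n | i ≡ 1 [MOD 3]} := by
      ext i
      simp only [mem_filter, mem_range, Nat.ModEq, Nat.one_mod]
      omega
    rw [hsplit, hcount]
    split_ifs <;> omega

theorem path_standard_CCD_general (n : ℕ) :
    CCD (pathG n)
      (Finset.univ.filter (fun i : Fin n => i.val % 3 = 1 ∨ (n % 3 = 1 ∧ i.val = n - 1))) ∧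
    (Finset.univ.filter
      (fun i : Fin n => i.val % 3 = 1 ∨ (n % 3 = 1 ∧ i.val = n - 1))).card = (n + 2) / 3 :=
  ⟨ccd_of_isIndepSet_of_nbrsIn_eq_one (isIndepSet_pathStandardSet n)
    fun _ _ => nbrsIn_pathStandardSet_eq_one, card_pathStandardSet n⟩

/-- The set of vertices `v_i` with `i ≡ 2 (mod 3)` (indices `≡ 1 (mod 3)` from 0),
together with the last vertex when `n ≡ 1 (mod 3)`, is a CCD subset of `P_n` of
size `⌈n/3⌉`. -/
theorem path_standard_CCD (n : ℕ) (hn : 1 ≤ n) :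
    CCD (pathG n)
      (Finset.univ.filter (fun i : Fin n => i.val % 3 = 1 ∨ (n % 3 = 1 ∧ i.val = n - 1))) ∧
    (Finset.univ.filter
      (fun i : Fin n => i.val % 3 = 1 ∨ (n % 3 = 1 ∧ i.val = n - 1))).card = (n + 2) / 3 :=
  path_standard_CCD_general n
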